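/- Forward invariance of the safe set under a barrier inequality (comparison lemma form): if x : [0,T) → ℝⁿ is differentiable, h : ℝⁿ → ℝ is continuously differentiable, α : ℝ → ℝ is locally Lipschitz with α(0) = 0 and strictly increasing, h(x(0)) > 0, and d/dt h(x(t)) ≥ −α(h(x(t))) for all t ∈ [0,T), then h(x(t)) > 0 for all t ∈ [0,T). -/
import Mathlib


open scoped RealInnerProductSpace

theorem barrier_forward_invariance
    {n : ℕ} (h : EuclideanSpace ℝ (Fin n) → ℝ) (hh : ContDiff ℝ 1 h)
    (α : ℝ → ℝ) (hα_lip : LocallyLipschitz α) (hα0 : α 0 = 0)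
    (hα_mono : StrictMono α)
    (T : ℝ) (hT : 0 < T)
    (x : ℝ → EuclideanSpace ℝ (Fin n)) (x' : ℝ → EuclideanSpace ℝ (Fin n))
    (hx : ∀ t ∈ Set.Ico (0 : ℝ) T, HasDerivAt x (x' t) t)
    (h0 : h (x 0) > 0)
    (hbar : ∀ t ∈ Set.Ico (0 : ℝ) T,
      HasDerivAt (fun s => h (x s)) (⟪gradient h (x t), x' t⟫) t ∧
        ⟪gradient h (x t), x' t⟫ ≥ -α (h (x t))) :
    ∀ t ∈ Set.Ico (0 : ℝ) T, h (x t) > 0 := by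
  set φ : ℝ → ℝ := fun s => h (x s) with hφdef
  by_contra hcon
  push_neg at hcon
  obtain ⟨t₁, ht₁, ht₁le⟩ := hcon
  have hcontφ : ∀ t ∈ Set.Ico (0 : ℝ) T, ContinuousAt φ t :=
    fun t ht => (hbar t ht).1.continuousAt
  have ht₁0 : (0 : ℝ) ≤ t₁ := ht₁.1
  have hsub1 : Set.Icc (0 : ℝ) t₁ ⊆ Set.Ico 0 T :=
    fun s hs => ⟨hs.1, lt_of_le_of_lt hs.2 ht₁.2⟩
  have hcont1 : ContinuousOn φ (Set.Icc (0 : ℝ) t₁) :=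
    fun s hs => (hcontφ s (hsub1 hs)).continuousWithinAt
  -- first time φ ≤ 0
  set S : Set ℝ := Set.Icc (0 : ℝ) t₁ ∩ φ ⁻¹' Set.Iic 0 with hSdef
  have hScl : IsClosed S := hcont1.preimage_isClosed_of_isClosed isClosed_Icc isClosed_Iic
  have hSne : S.Nonempty := ⟨t₁, ⟨ht₁0, le_rfl⟩, ht₁le⟩
  have hSbdd : BddBelow S := ⟨0, fun s hs => hs.1.1⟩
  set ts : ℝ := sInf S with htsdef
  have htsS : ts ∈ S := hScl.csInf_mem hSne hSbdd
  have hts0 : 0 ≤ ts := htsS.1.1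
  have htst₁ : ts ≤ t₁ := htsS.1.2
  have htsT : ts < T := lt_of_le_of_lt htst₁ ht₁.2
  have hφts : φ ts ≤ 0 := htsS.2
  have hpos : ∀ t, 0 ≤ t → t < ts → 0 < φ t := by
    intro t ht0 htlt
    by_contra hle
    push_neg at hle
    exact absurd (csInf_le hSbdd ⟨⟨ht0, le_trans htlt.le htst₁⟩, hle⟩) (not_le.mpr htlt)
  have hts_pos : 0 < ts := by
    rcases lt_or_eq_of_le hts0 with h' | h'
    · exact h'
    · exact absurd (h' ▸ hφts) (not_le.mpr h0)
  -- local Lipschitz data at 0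
  obtain ⟨K, s, hs, hKs⟩ := hα_lip 0
  obtain ⟨ε, hε, hball⟩ := Metric.mem_nhds_iff.mp hs
  have hKball : LipschitzOnWith K α (Metric.ball 0 ε) := hKs.mono hball
  set c : ℝ := min (ε / 2) (φ 0) with hcdef
  have hc_pos : 0 < c := lt_min (by linarith) h0
  have hc_lt : c < ε := lt_of_le_of_lt (min_le_left _ _) (by linarith)
  -- last time (before ts) where φ ≥ c
  have hsub2 : Set.Icc (0 : ℝ) ts ⊆ Set.Ico 0 T :=
    fun u hu => ⟨hu.1, lt_of_le_of_lt hu.2 htsT⟩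
  have hcont2 : ContinuousOn φ (Set.Icc (0 : ℝ) ts) :=
    fun u hu => (hcontφ u (hsub2 hu)).continuousWithinAt
  set A : Set ℝ := Set.Icc (0 : ℝ) ts ∩ φ ⁻¹' Set.Ici c with hAdef
  have hAcl : IsClosed A := hcont2.preimage_isClosed_of_isClosed isClosed_Icc isClosed_Ici
  have hAne : A.Nonempty := ⟨0, ⟨le_rfl, hts0⟩, show c ≤ φ 0 from min_le_right _ _⟩
  have hAbdd : BddAbove A := ⟨ts, fun u hu => hu.1.2⟩
  set t₀ : ℝ := sSup A with ht₀def
  have ht₀A : t₀ ∈ A := hAcl.csSup_mem hAne hAbdd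
  have ht₀0 : 0 ≤ t₀ := ht₀A.1.1
  have ht₀ts : t₀ ≤ ts := ht₀A.1.2
  have hφt₀ : c ≤ φ t₀ := ht₀A.2
  have ht₀lt : t₀ < ts := by
    rcases lt_or_eq_of_le ht₀ts with h' | h'
    · exact h'
    · exact absurd (h' ▸ hφt₀) (not_le.mpr (lt_of_le_of_lt hφts hc_pos))
  have hsmall : ∀ t, t₀ < t → t ≤ ts → φ t < c := by
    intro t htl htr
    by_contra hge
    push_neg at hge
    exact absurd (le_csSup hAbdd ⟨⟨le_trans ht₀0 htl.le, htr⟩, hge⟩) (not_le.mpr htl)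
  -- the auxiliary function ψ
  set ψ : ℝ → ℝ := fun u => Real.exp ((K : ℝ) * u) * φ u with hψdef
  have hψderiv : ∀ t ∈ Set.Ico (0 : ℝ) T,
      HasDerivAt ψ (Real.exp ((K : ℝ) * t) * (K : ℝ) * φ t
        + Real.exp ((K : ℝ) * t) * ⟪gradient h (x t), x' t⟫) t := by
    intro t ht
    have h1 : HasDerivAt (fun u : ℝ => (K : ℝ) * u) ((K : ℝ)) t := by
      simpa using (hasDerivAt_id t).const_mul (K : ℝ)
    have h2 : HasDerivAt (fun u : ℝ => Real.exp ((K : ℝ) * u))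
        (Real.exp ((K : ℝ) * t) * (K : ℝ)) t :=
      (Real.hasDerivAt_exp ((K : ℝ) * t)).comp t h1
    exact h2.mul (hbar t ht).1
  have hsub3 : Set.Icc t₀ ts ⊆ Set.Ico 0 T :=
    fun u hu => ⟨le_trans ht₀0 hu.1, lt_of_le_of_lt hu.2 htsT⟩
  have hmono : MonotoneOn ψ (Set.Icc t₀ ts) := by
    apply monotoneOn_of_deriv_nonneg (convex_Icc t₀ ts)
    · exact fun u hu => ((hψderiv u (hsub3 hu)).continuousAt).continuousWithinAt
    · intro u hu
      rw [interior_Icc] at hu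
      exact ((hψderiv u (hsub3 ⟨hu.1.le, hu.2.le⟩)).differentiableAt).differentiableWithinAt
    · intro u hu
      rw [interior_Icc] at hu
      have huIco : u ∈ Set.Ico (0 : ℝ) T := hsub3 ⟨hu.1.le, hu.2.le⟩
      have hd := hψderiv u huIco
      rw [hd.deriv]
      have hφu_pos : 0 < φ u := hpos u (le_trans ht₀0 hu.1.le) hu.2
      have hφu_lt : φ u < c := hsmall u hu.1 hu.2.le
      -- Lipschitz bound: α (φ u) ≤ K * φ u
      have hmem : φ u ∈ Metric.ball (0 : ℝ) ε := by
        rw [Metric.mem_ball, Real.dist_eq, sub_zero, abs_of_pos hφu_pos]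
        exact lt_trans hφu_lt hc_lt
      have h0mem : (0 : ℝ) ∈ Metric.ball (0 : ℝ) ε := Metric.mem_ball_self hε
      have hdist := hKball.dist_le_mul (φ u) hmem 0 h0mem
      rw [Real.dist_eq, Real.dist_eq, hα0, sub_zero, sub_zero,
        abs_of_pos hφu_pos] at hdist
      have hαle : α (φ u) ≤ (K : ℝ) * φ u := le_trans (le_abs_self _) hdist
      have hD := (hbar u huIco).2
      have hexp : (0 : ℝ) < Real.exp ((K : ℝ) * u) := Real.exp_pos _
      nlinarith [hexp]
  have hle := hmono ⟨le_rfl, ht₀ts⟩ ⟨ht₀ts, le_rfl⟩ ht₀ts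
  have h1 : (0 : ℝ) < ψ t₀ :=
    mul_pos (Real.exp_pos _) (lt_of_lt_of_le hc_pos hφt₀)
  have h2 : ψ ts ≤ 0 := mul_nonpos_of_nonneg_of_nonpos (Real.exp_pos _).le hφts
  linarith
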